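/- Let (W,S) be a Coxeter system and let K be a subset of W having a unique maximal element v in the Bruhat order. Then, for any two elements σ₁ and σ₂ of W, the set I(σ₁) K I(σ₂) = { a k b : a ≤ σ₁, k ∈ K, b ≤ σ₂ } has a unique maximal element in the Bruhat order, namely the unique maximal element of I(σ₁) v I(σ₂). In particular, for any two finite standard parabolic subgroups W₁ and W₂ of W, the set W₁ K W₂ has a unique maximal element, namely the unique maximal element of W₁ v W₂. -/

import Mathlib

/-!
Write `I(σ)` for the Bruhat interval below `σ`. By the lifting property, if `x ≤ w` and `s` is
simple, then `x` and `x s` both lie below whichever of `w`, `w s` is longer. Folding the letters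
of a reduced word of `σ` into `w` this way (a Demazure product) gives an element of `w I(σ)` above
every `x b` with `x ≤ w`, `b ≤ σ`. Doing this on the right and, after inverting, on the left
yields an element of `I(σ₁) v I(σ₂)` above every `a k b` with `a ≤ σ₁`, `k ≤ v`, `b ≤ σ₂`, hence
the maximum of both `I(σ₁) v I(σ₂)` and `I(σ₁) K I(σ₂)`. A finite standard parabolic subgroup is
the interval below its longest element, which gives the second statement.

The lifting property needs the subword description of `x ≤ w` to hold in every reduced word of
`w`; this goes through the chain description of the Bruhat order and the strong exchange
condition, which in turn comes from Tits' sign representation of `W` on `W × {±1}`.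
-/

variable {B W : Type*} [Group W] {M : CoxeterMatrix B}

/-- The (strong) Bruhat order on the Coxeter group `W`: `u ≤ v` if and only if some
reduced word for `v` admits a sublist whose product is `u`. -/
def BruhatLE (cs : CoxeterSystem M W) (u v : W) : Prop :=
  ∃ ω : List B, cs.IsReduced ω ∧ cs.wordProd ω = v ∧
    ∃ ω' : List B, ω'.Sublist ω ∧ cs.wordProd ω' = u

/-- The strict Bruhat order. -/
def BruhatLT (cs : CoxeterSystem M W) (u v : W) : Prop :=
  BruhatLE cs u v ∧ u ≠ v

/-- `m` is the unique minimal element of `K` in the Bruhat order, i.e. `m ∈ K` and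
`m` is Bruhat-below every element of `K`. -/
def IsBrMin (cs : CoxeterSystem M W) (K : Set W) (m : W) : Prop :=
  m ∈ K ∧ ∀ x ∈ K, BruhatLE cs m x

/-- `m` is the unique maximal element of `K` in the Bruhat order, i.e. `m ∈ K` and
`m` is Bruhat-above every element of `K`. -/
def IsBrMax (cs : CoxeterSystem M W) (K : Set W) (m : W) : Prop :=
  m ∈ K ∧ ∀ x ∈ K, BruhatLE cs x m

/-- A standard parabolic subgroup: a subgroup generated by a subset of the simple
reflections. -/
def IsStdParabolic (cs : CoxeterSystem M W) (P : Subgroup W) : Prop :=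
  ∃ X : Set B, P = Subgroup.closure (cs.simple '' X)

/-- The left coset `u•W₁ = {u * b : b ∈ W₁}`. -/
def lCoset (W₁ : Subgroup W) (u : W) : Set W := {x | ∃ b ∈ W₁, x = u * b}

/-- The double coset `W₁ u W₂ = {a * u * b : a ∈ W₁, b ∈ W₂}`. -/
def dblCoset (W₁ W₂ : Subgroup W) (u : W) : Set W :=
  {x | ∃ a ∈ W₁, ∃ b ∈ W₂, x = a * u * b}

namespace CoxeterSystem

variable (cs : CoxeterSystem M W)

lemma prod_map_alternatingWord_two_mul {G : Type*} [Monoid G] (f : B → G) (i j : B) (m : ℕ) :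
    ((alternatingWord i j (2 * m)).map f).prod = (f i * f j) ^ m := by
  induction m with
  | zero => simp [alternatingWord]
  | succ m ih =>
    have : alternatingWord i j (2 * (m + 1)) = alternatingWord i j (2 * m) ++ [i, j] := by
      simp [mul_add, alternatingWord]
    rw [this, List.map_append, List.prod_append, ih, pow_succ]
    simp

lemma leftInvSeq_alternatingWord_two_mul (i j : B) (p : ℕ) :
    cs.leftInvSeq (alternatingWord i j (2 * p)) =
      (List.range (2 * p)).map fun k => cs.simple i * (cs.simple j * cs.simple i) ^ k := by
  refine List.ext_getElem (by simp) fun k hk _ => ?_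
  rw [getElem_leftInvSeq_alternatingWord cs i j p k (by simpa using hk),
    prod_alternatingWord_eq_mul_pow]
  simp [show (2 * k + 1) / 2 = k by omega]

section SignRepresentation

variable [DecidableEq W]

def signPermFun (i : B) (p : W × ℤˣ) : W × ℤˣ :=
  (cs.simple i * p.1 * cs.simple i, if p.1 = cs.simple i then -p.2 else p.2)

lemma signPermFun_involutive (i : B) : Function.Involutive (cs.signPermFun i) := by
  rintro ⟨x, ε⟩
  by_cases hx : x = cs.simple i <;> simp [signPermFun, hx, mul_assoc, mul_eq_one_iff_eq_inv]

def signPerm (i : B) : Equiv.Perm (W × ℤˣ) := (cs.signPermFun_involutive i).toPerm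

lemma prod_map_signPerm_apply (ω : List B) (t : W) (ε : ℤˣ) :
    (ω.map cs.signPerm).prod ((cs.wordProd ω)⁻¹ * t * cs.wordProd ω, ε) =
      (t, ε * (-1) ^ (cs.leftInvSeq ω).count t) := by
  induction ω generalizing t ε with
  | nil => simp
  | cons i ω ih =>
    have hconj : (cs.wordProd (i :: ω))⁻¹ * t * cs.wordProd (i :: ω) =
        (cs.wordProd ω)⁻¹ * (cs.simple i * t * cs.simple i) * cs.wordProd ω := by
      simp [wordProd_cons, mul_assoc]
    have hcount : (cs.leftInvSeq (i :: ω)).count t =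
        (cs.leftInvSeq ω).count (cs.simple i * t * cs.simple i) +
          if cs.simple i = t then 1 else 0 := by
      have hmap := List.count_map_of_injective (cs.leftInvSeq ω) _
        (MulAut.conj (cs.simple i)).injective (cs.simple i * t * cs.simple i)
      simp only [MulAut.conj_apply, inv_simple, mul_assoc, simple_mul_simple_cancel_left,
        simple_mul_simple_self, mul_one] at hmap
      rw [leftInvSeq, List.count_cons, hmap, mul_assoc]
      simp
    rw [List.map_cons, List.prod_cons, Equiv.Perm.mul_apply, hconj, ih, hcount]
    by_cases ht : t = cs.simple i
    · subst ht
      simp [signPerm, signPermFun, pow_succ]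
    · simp [signPerm, signPermFun, mul_assoc, mul_eq_one_iff_eq_inv, ht, Ne.symm ht]

lemma even_count_leftInvSeq_alternatingWord_two_mul (i j : B) (t : W) :
    Even ((cs.leftInvSeq (alternatingWord i j (2 * M i j))).count t) := by
  have hperiod : ∀ k, (cs.simple j * cs.simple i) ^ (M i j + k) = (cs.simple j * cs.simple i) ^ k :=
    fun k => by rw [pow_add, simple_mul_simple_pow', one_mul]
  rw [leftInvSeq_alternatingWord_two_mul, two_mul, List.range_add, List.map_append, List.map_map,
    List.count_append]
  simp only [Function.comp_def, hperiod]
  exact ⟨_, rfl⟩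

lemma signPerm_isLiftable : M.IsLiftable cs.signPerm := by
  intro i j
  rw [← prod_map_alternatingWord_two_mul]
  have hone : cs.wordProd (alternatingWord i j (2 * M i j)) = 1 := by
    rw [wordProd, prod_map_alternatingWord_two_mul, simple_mul_simple_pow]
  ext1 ⟨t, ε⟩
  have := cs.prod_map_signPerm_apply (alternatingWord i j (2 * M i j)) t ε
  rwa [hone, inv_one, one_mul, mul_one,
    (cs.even_count_leftInvSeq_alternatingWord_two_mul i j t).neg_one_pow, mul_one] at this

def signRep : W →* Equiv.Perm (W × ℤˣ) := cs.lift ⟨cs.signPerm, cs.signPerm_isLiftable⟩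

lemma signRep_simple (i : B) : cs.signRep (cs.simple i) = cs.signPerm i :=
  cs.lift_apply_simple cs.signPerm_isLiftable i

lemma signRep_wordProd_apply (ω : List B) (t : W) (ε : ℤˣ) :
    cs.signRep (cs.wordProd ω) ((cs.wordProd ω)⁻¹ * t * cs.wordProd ω, ε) =
      (t, ε * (-1) ^ (cs.leftInvSeq ω).count t) := by
  rw [← prod_map_signPerm_apply, wordProd, map_list_prod, List.map_map]
  simp only [Function.comp_def, signRep_simple]

lemma exists_signRep_apply (u x : W) :
    ∃ c : ℤˣ, ∀ ε, cs.signRep u (x, ε) = (u * x * u⁻¹, ε * c) := by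
  obtain ⟨μ, rfl⟩ := cs.wordProd_surjective u
  refine ⟨(-1) ^ (cs.leftInvSeq μ).count (cs.wordProd μ * x * (cs.wordProd μ)⁻¹), fun ε => ?_⟩
  have := cs.signRep_wordProd_apply μ (cs.wordProd μ * x * (cs.wordProd μ)⁻¹) ε
  rwa [show (cs.wordProd μ)⁻¹ * (cs.wordProd μ * x * (cs.wordProd μ)⁻¹) * cs.wordProd μ = x by
    group] at this

lemma signRep_apply_self {t : W} (ht : cs.IsReflection t) (ε : ℤˣ) :
    cs.signRep t (t, ε) = (t, -ε) := by
  obtain ⟨u, i, rfl⟩ := ht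
  obtain ⟨c, hc⟩ := cs.exists_signRep_apply u (cs.simple i)
  have hinv : cs.signRep u⁻¹ (u * cs.simple i * u⁻¹, ε) = (cs.simple i, ε * c⁻¹) := by
    rw [map_inv, Equiv.Perm.inv_eq_iff_eq, hc, inv_mul_cancel_right]
  have hsimple : cs.signPerm i (cs.simple i, ε * c⁻¹) = (cs.simple i, -(ε * c⁻¹)) := by
    simp [signPerm, signPermFun]
  rw [map_mul, map_mul, Equiv.Perm.mul_apply, Equiv.Perm.mul_apply, hinv, signRep_simple,
    hsimple, hc, neg_mul, inv_mul_cancel_right]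

end SignRepresentation

theorem mem_leftInvSeq_of_length_mul_lt (ω : List B) {t : W} (ht : cs.IsReflection t)
    (hlt : cs.length (t * cs.wordProd ω) < cs.length (cs.wordProd ω)) :
    t ∈ cs.leftInvSeq ω := by
  classical
  by_contra hω
  obtain ⟨ω', hω'red, hω'eq⟩ := cs.exists_isReduced (t * cs.wordProd ω)
  have hω' : t ∉ cs.leftInvSeq ω' := fun hmem => by
    have := (cs.isLeftInversion_of_mem_leftInvSeq hω'red hmem).2
    rw [← hω'eq, ← mul_assoc, ht.mul_self, one_mul] at this
    omega
  -- As `t` is in neither inversion sequence, `signRep w` and `signRep (t * w)` both keep the sign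
  -- attached to `t`, while `signRep t` flips it; but `w = t * (t * w)`.
  set w := cs.wordProd ω
  have h₁ := cs.signRep_wordProd_apply ω t 1
  have h₂ := cs.signRep_wordProd_apply ω' t 1
  rw [List.count_eq_zero.mpr hω, pow_zero, mul_one] at h₁
  rw [List.count_eq_zero.mpr hω', pow_zero, mul_one, ← hω'eq,
    show (t * w)⁻¹ * t * (t * w) = w⁻¹ * t * w by group] at h₂
  have hrep : cs.signRep w = cs.signRep t * cs.signRep (t * w) := by
    rw [← map_mul, ← mul_assoc, ht.mul_self, one_mul]
  have h₃ : cs.signRep w (w⁻¹ * t * w, 1) = (t, -1) := by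
    rw [hrep, Equiv.Perm.mul_apply, h₂, signRep_apply_self cs ht]
  rw [h₁] at h₃
  exact absurd (congr_arg Prod.snd h₃) (show (1 : ℤˣ) ≠ -1 by decide)

theorem exists_wordProd_eraseIdx_eq (ω : List B) {t : W} (ht : cs.IsReflection t)
    (hlt : cs.length (t * cs.wordProd ω) < cs.length (cs.wordProd ω)) :
    ∃ j < ω.length, cs.wordProd (ω.eraseIdx j) = t * cs.wordProd ω := by
  obtain ⟨j, hj, rfl⟩ := List.mem_iff_getElem.mp (cs.mem_leftInvSeq_of_length_mul_lt ω ht hlt)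
  refine ⟨j, by simpa using hj, ?_⟩
  rw [← getD_leftInvSeq_mul_wordProd, List.getD_eq_getElem]

end CoxeterSystem

open CoxeterSystem

section BruhatOrder

open Relation

variable {cs : CoxeterSystem M W}

def BruhatStep (cs : CoxeterSystem M W) (x y : W) : Prop :=
  ∃ t, cs.IsReflection t ∧ x = t * y ∧ cs.length x < cs.length y

lemma bruhatStep_mul_simple {y : W} {i : B} (h : cs.length y < cs.length (y * cs.simple i)) :
    BruhatStep cs y (y * cs.simple i) :=
  ⟨y * cs.simple i * y⁻¹, (cs.isReflection_simple i).conj y, by simp [mul_assoc], h⟩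

lemma exists_sublist_of_reflTransGen {x y : W} (h : ReflTransGen (BruhatStep cs) x y)
    {ω : List B} (hω : cs.wordProd ω = y) : ∃ μ, μ.Sublist ω ∧ cs.wordProd μ = x := by
  induction h generalizing ω with
  | refl => exact ⟨ω, .refl ω, hω⟩
  | tail _ hstep ih =>
    obtain ⟨t, ht, rfl, hlt⟩ := hstep
    subst hω
    obtain ⟨j, -, hj⟩ := cs.exists_wordProd_eraseIdx_eq ω ht hlt
    obtain ⟨μ, hμ, rfl⟩ := ih hj
    exact ⟨μ, hμ.trans (List.eraseIdx_sublist ω j), rfl⟩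

lemma BruhatStep.mul_simple_eq_or {x y : W} (h : BruhatStep cs x y) (i : B) :
    x * cs.simple i = y ∨ BruhatStep cs (x * cs.simple i) (y * cs.simple i) := by
  obtain ⟨t, ht, rfl, hlt⟩ := h
  have hstep (hlt' : cs.length (t * y * cs.simple i) < cs.length (y * cs.simple i)) :
      BruhatStep cs (t * y * cs.simple i) (y * cs.simple i) :=
    ⟨t, ht, mul_assoc _ _ _, hlt'⟩
  rcases cs.length_mul_simple y i with hup | hdown
  · have := cs.length_mul_simple (t * y) i
    exact .inr (hstep (by omega))
  -- Exchange in a reduced word `ω ++ [i]` of `y` either deletes the final letter, and then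
  -- `x * s = y`, or makes `x * s` shorter than `y * s`.
  obtain ⟨ω, hω, hωy⟩ := cs.exists_isReduced (y * cs.simple i)
  have hy : y = cs.wordProd (ω ++ [i]) := by
    rw [wordProd_append, wordProd_singleton, ← hωy, simple_mul_simple_cancel_right]
  rw [hy] at hlt
  obtain ⟨j, hj, hje⟩ := cs.exists_wordProd_eraseIdx_eq (ω ++ [i]) ht hlt
  rw [← hy] at hje
  rcases (show j = ω.length ∨ j < ω.length by simp at hj; omega) with rfl | hj
  · left
    rw [← hje, List.eraseIdx_append_of_length_le le_rfl]
    simp [← hωy]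
  · right
    apply hstep
    rw [← hje, List.eraseIdx_append_of_lt_length hj, wordProd_append, wordProd_singleton,
      simple_mul_simple_cancel_right]
    calc cs.length (cs.wordProd (ω.eraseIdx j)) ≤ (ω.eraseIdx j).length := cs.length_wordProd_le _
      _ < ω.length := by rw [List.length_eraseIdx_of_lt hj]; omega
      _ = cs.length (y * cs.simple i) := by rw [hωy, hω]

lemma reflTransGen_mul_simple_or {x y : W} (h : ReflTransGen (BruhatStep cs) x y) (i : B) :
    ReflTransGen (BruhatStep cs) (x * cs.simple i) y ∨
      ReflTransGen (BruhatStep cs) (x * cs.simple i) (y * cs.simple i) := by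
  induction h with
  | refl => exact .inr .refl
  | tail _ hstep ih =>
    rcases ih with h | h
    · exact .inl (h.tail hstep)
    · rcases hstep.mul_simple_eq_or i with heq | hstep'
      · exact .inl (heq ▸ h)
      · exact .inr (h.tail hstep')

lemma reflTransGen_of_sublist {ω μ : List B} (hω : cs.IsReduced ω) (hμ : μ.Sublist ω) :
    ReflTransGen (BruhatStep cs) (cs.wordProd μ) (cs.wordProd ω) := by
  induction ω using List.reverseRecOn generalizing μ with
  | nil => rw [List.sublist_nil.mp hμ]
  | append_singleton κ i ih =>
    have hκ : cs.IsReduced κ := by simpa using hω.take κ.length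
    have hstep : BruhatStep cs (cs.wordProd κ) (cs.wordProd κ * cs.simple i) := by
      apply bruhatStep_mul_simple
      have := hω.eq
      rw [wordProd_append, wordProd_singleton] at this
      simp only [List.length_append, List.length_singleton, ← hκ.eq] at this
      omega
    obtain ⟨ν, ξ, rfl, hν, hξ⟩ := List.sublist_append_iff.mp hμ
    rcases List.sublist_singleton.mp hξ with rfl | rfl
    · rw [List.append_nil, wordProd_append, wordProd_singleton]
      exact (ih hκ hν).tail hstep
    · simp only [wordProd_append, wordProd_singleton]
      exact (reflTransGen_mul_simple_or (ih hκ hν) i).elim (·.tail hstep) id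

theorem BruhatLE.exists_sublist {x w : W} (h : BruhatLE cs x w) {ω : List B}
    (hω : cs.wordProd ω = w) : ∃ μ, μ.Sublist ω ∧ cs.wordProd μ = x := by
  obtain ⟨ω₀, hω₀, rfl, μ₀, hμ₀, rfl⟩ := h
  exact exists_sublist_of_reflTransGen (reflTransGen_of_sublist hω₀ hμ₀) hω

lemma bruhatLE_of_sublist {ω μ : List B} (hω : cs.IsReduced ω) (hμ : μ.Sublist ω) :
    BruhatLE cs (cs.wordProd μ) (cs.wordProd ω) :=
  ⟨ω, hω, rfl, μ, hμ, rfl⟩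

lemma one_bruhatLE (w : W) : BruhatLE cs 1 w := by
  obtain ⟨ω, hω, rfl⟩ := cs.exists_isReduced w
  exact cs.wordProd_nil ▸ bruhatLE_of_sublist hω (List.nil_sublist ω)

lemma BruhatLE.refl (w : W) : BruhatLE cs w w := by
  obtain ⟨ω, hω, rfl⟩ := cs.exists_isReduced w
  exact bruhatLE_of_sublist hω (.refl ω)

lemma BruhatLE.inv {x y : W} (h : BruhatLE cs x y) : BruhatLE cs x⁻¹ y⁻¹ := by
  obtain ⟨ω, hω, rfl, μ, hμ, rfl⟩ := h
  simpa using bruhatLE_of_sublist hω.reverse hμ.reverse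

lemma bruhatLE_inv_iff {x y : W} : BruhatLE cs x⁻¹ y⁻¹ ↔ BruhatLE cs x y :=
  ⟨fun h => by simpa using h.inv, BruhatLE.inv⟩

lemma CoxeterSystem.IsReduced.append_singleton {ω : List B} (hω : cs.IsReduced ω) {i : B}
    (hi : cs.length (cs.wordProd ω) < cs.length (cs.wordProd ω * cs.simple i)) :
    cs.IsReduced (ω ++ [i]) := by
  have := cs.length_mul_simple (cs.wordProd ω) i
  unfold CoxeterSystem.IsReduced
  rw [wordProd_append, wordProd_singleton, List.length_append, List.length_singleton,
    ← hω.eq]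
  omega

lemma BruhatLE.mul_simple_of_ascent {x w : W} (h : BruhatLE cs x w) {i : B}
    (hw : cs.length w < cs.length (w * cs.simple i)) :
    BruhatLE cs x (w * cs.simple i) ∧ BruhatLE cs (x * cs.simple i) (w * cs.simple i) := by
  obtain ⟨ω, hω, rfl, μ, hμ, rfl⟩ := h
  have hωi := hω.append_singleton hw
  rw [← wordProd_singleton, ← wordProd_append, ← wordProd_append]
  exact ⟨bruhatLE_of_sublist hωi (hμ.trans (List.sublist_append_left ω [i])),
    bruhatLE_of_sublist hωi (hμ.append_right [i])⟩

lemma BruhatLE.mul_simple_of_descent {x w : W} (h : BruhatLE cs x w) {i : B}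
    (hw : cs.length (w * cs.simple i) < cs.length w) : BruhatLE cs (x * cs.simple i) w := by
  obtain ⟨ω, hω, hωw⟩ := cs.exists_isReduced (w * cs.simple i)
  have hωi : cs.IsReduced (ω ++ [i]) :=
    hω.append_singleton (by rwa [← hωw, simple_mul_simple_cancel_right])
  have hw' : cs.wordProd (ω ++ [i]) = w := by
    rw [wordProd_append, wordProd_singleton, ← hωw, simple_mul_simple_cancel_right]
  obtain ⟨μ, hμ, rfl⟩ := h.exists_sublist hw'
  obtain ⟨ν, ξ, rfl, hν, hξ⟩ := List.sublist_append_iff.mp hμ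
  rw [← hw']
  rcases List.sublist_singleton.mp hξ with rfl | rfl
  · rw [List.append_nil, ← wordProd_singleton, ← wordProd_append]
    exact bruhatLE_of_sublist hωi (hν.append_right [i])
  · rw [wordProd_append, wordProd_singleton, simple_mul_simple_cancel_right]
    exact bruhatLE_of_sublist hωi (hν.trans (List.sublist_append_left ω [i]))

end BruhatOrder

section DemazureProduct

variable (cs : CoxeterSystem M W)

lemma exists_max_mul_simple (w : W) (i : B) :
    ∃ w', (w' = w ∨ w' = w * cs.simple i) ∧
      ∀ x, BruhatLE cs x w → BruhatLE cs x w' ∧ BruhatLE cs (x * cs.simple i) w' := by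
  rcases cs.length_mul_simple w i with hup | hdown
  · exact ⟨_, .inr rfl, fun x hx => hx.mul_simple_of_ascent (by omega)⟩
  · exact ⟨w, .inl rfl, fun x hx => ⟨hx, hx.mul_simple_of_descent (by omega)⟩⟩

lemma exists_max_mul_sublist (ω : List B) (w : W) :
    ∃ m, (∃ ν, ν.Sublist ω ∧ m = w * cs.wordProd ν) ∧
      ∀ x ν, BruhatLE cs x w → ν.Sublist ω → BruhatLE cs (x * cs.wordProd ν) m := by
  induction ω generalizing w with
  | nil =>
    refine ⟨w, ⟨[], .refl [], by simp⟩, fun x ν hx hν => ?_⟩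
    simpa [List.sublist_nil.mp hν] using hx
  | cons i ω ih =>
    obtain ⟨w', hw', hw'max⟩ := exists_max_mul_simple cs w i
    obtain ⟨m, ⟨ν, hν, rfl⟩, hm⟩ := ih w'
    refine ⟨w' * cs.wordProd ν, ?_, fun x μ hx hμ => ?_⟩
    · rcases hw' with rfl | rfl
      · exact ⟨ν, hν.cons i, rfl⟩
      · exact ⟨i :: ν, hν.cons_cons i, by rw [wordProd_cons, mul_assoc]⟩
    · rcases List.sublist_cons_iff.mp hμ with hμ | ⟨μ, rfl, hμ'⟩
      · exact hm x μ (hw'max x hx).1 hμ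
      · rw [wordProd_cons, ← mul_assoc]
        exact hm _ μ (hw'max x hx).2 hμ'

lemma exists_max_mul_bruhatLE (w σ : W) :
    ∃ m, (∃ b, BruhatLE cs b σ ∧ m = w * b) ∧
      ∀ x b, BruhatLE cs x w → BruhatLE cs b σ → BruhatLE cs (x * b) m := by
  obtain ⟨ω, hω, rfl⟩ := cs.exists_isReduced σ
  obtain ⟨m, ⟨ν, hν, rfl⟩, hm⟩ := exists_max_mul_sublist cs ω w
  refine ⟨_, ⟨_, bruhatLE_of_sublist hω hν, rfl⟩, fun x b hx hb => ?_⟩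
  obtain ⟨μ, hμ, rfl⟩ := hb.exists_sublist rfl
  exact hm x μ hx hμ

lemma exists_max_bruhatLE_mul_mul (σ₁ v σ₂ : W) :
    ∃ m, (∃ a b, BruhatLE cs a σ₁ ∧ BruhatLE cs b σ₂ ∧ m = a * v * b) ∧
      ∀ a k b, BruhatLE cs a σ₁ → BruhatLE cs k v → BruhatLE cs b σ₂ →
        BruhatLE cs (a * k * b) m := by
  obtain ⟨m₁, ⟨b, hb, rfl⟩, hm₁⟩ := exists_max_mul_bruhatLE cs v σ₂
  obtain ⟨m, ⟨c, hc, rfl⟩, hm⟩ := exists_max_mul_bruhatLE cs (v * b)⁻¹ σ₁⁻¹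
  refine ⟨((v * b)⁻¹ * c)⁻¹, ⟨c⁻¹, b, by simpa using hc.inv, hb, by group⟩,
    fun a k b' ha hk hb' => ?_⟩
  have := hm _ _ (hm₁ k b' hk hb').inv ha.inv
  rw [← bruhatLE_inv_iff]
  simpa [mul_assoc] using this

theorem exists_isBrMax_bruhatLE_mul_mul {K : Set W} {v : W} (hK : IsBrMax cs K v) (σ₁ σ₂ : W) :
    ∃ m : W,
      IsBrMax cs
        {x | ∃ a, BruhatLE cs a σ₁ ∧ ∃ k ∈ K, ∃ b, BruhatLE cs b σ₂ ∧ x = a * k * b} m ∧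
      IsBrMax cs {x | ∃ a, BruhatLE cs a σ₁ ∧ ∃ b, BruhatLE cs b σ₂ ∧ x = a * v * b} m := by
  obtain ⟨_, ⟨a, b, ha, hb, rfl⟩, hm⟩ := exists_max_bruhatLE_mul_mul cs σ₁ v σ₂
  refine ⟨_, ⟨⟨a, ha, v, hK.1, b, hb, rfl⟩, ?_⟩, ⟨a, ha, b, hb, rfl⟩, ?_⟩
  · rintro _ ⟨a, ha, k, hk, b, hb, rfl⟩
    exact hm a k b ha (hK.2 k hk) hb
  · rintro _ ⟨a, ha, b, hb, rfl⟩
    exact hm a v b ha (.refl v) hb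

end DemazureProduct

section Parabolic

variable (cs : CoxeterSystem M W)

lemma exists_word_of_mem_closure {X : Set B} {w : W}
    (hw : w ∈ Subgroup.closure (cs.simple '' X)) :
    ∃ ω : List B, (∀ i ∈ ω, i ∈ X) ∧ cs.wordProd ω = w := by
  induction hw using Subgroup.closure_induction_right with
  | one => exact ⟨[], by simp, rfl⟩
  | mul_right x _ y hy ih | mul_inv_cancel x _ y hy ih =>
    obtain ⟨i, hi, rfl⟩ := hy
    obtain ⟨ω, hω, rfl⟩ := ih
    exact ⟨ω ++ [i], by simpa [or_imp, forall_and] using ⟨hω, hi⟩, by simp [wordProd_append]⟩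

lemma wordProd_mem_closure {X : Set B} {ω : List B} (hω : ∀ i ∈ ω, i ∈ X) :
    cs.wordProd ω ∈ Subgroup.closure (cs.simple '' X) :=
  list_prod_mem fun _ h => by
    obtain ⟨i, hi, rfl⟩ := List.mem_map.mp h
    exact Subgroup.subset_closure ⟨i, hω i hi, rfl⟩

theorem exists_forall_mem_closure_iff_bruhatLE (X : Set B)
    (hX : (Subgroup.closure (cs.simple '' X) : Set W).Finite) :
    ∃ p, ∀ w, w ∈ Subgroup.closure (cs.simple '' X) ↔ BruhatLE cs w p := by
  set P := Subgroup.closure (cs.simple '' X)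
  obtain ⟨p, hp, hpmax⟩ := Set.exists_max_image (P : Set W) cs.length hX ⟨1, P.one_mem⟩
  have hdesc (i : B) (hi : i ∈ X) : cs.length (p * cs.simple i) < cs.length p :=
    lt_of_le_of_ne (hpmax _ (P.mul_mem hp (Subgroup.subset_closure ⟨i, hi, rfl⟩)))
      (cs.length_mul_simple_ne p i)
  refine ⟨p, fun w => ⟨fun hw => ?_, fun hw => ?_⟩⟩
  · induction hw using Subgroup.closure_induction_right with
    | one => exact one_bruhatLE p
    | mul_right x _ y hy ih | mul_inv_cancel x _ y hy ih =>
      obtain ⟨i, hi, rfl⟩ := hy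
      simpa using ih.mul_simple_of_descent (hdesc i hi)
  · obtain ⟨ω, hω, rfl⟩ := exists_word_of_mem_closure cs hp
    obtain ⟨μ, hμ, rfl⟩ := hw.exists_sublist rfl
    exact wordProd_mem_closure cs fun i hi => hω i (hμ.subset hi)

end Parabolic

/-- If `K ⊆ W` has a unique Bruhat-maximal element `v`, then for any `σ₁, σ₂ ∈ W` the
set `I(σ₁) K I(σ₂)` has a unique maximal element, namely the unique maximal element of
`I(σ₁) v I(σ₂)`.  In particular, for any two finite standard parabolic subgroups
`W₁, W₂`, the set `W₁ K W₂` has a unique maximal element, namely the unique maximal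
element of `W₁ v W₂`. -/
theorem stmt_5 (cs : CoxeterSystem M W) (K : Set W) (v : W) (hK : IsBrMax cs K v) :
    (∀ σ₁ σ₂ : W,
      ∃ m : W,
        IsBrMax cs
          {x | ∃ a, BruhatLE cs a σ₁ ∧ ∃ k ∈ K, ∃ b, BruhatLE cs b σ₂ ∧ x = a * k * b} m ∧
        IsBrMax cs
          {x | ∃ a, BruhatLE cs a σ₁ ∧ ∃ b, BruhatLE cs b σ₂ ∧ x = a * v * b} m) ∧
    (∀ W₁ W₂ : Subgroup W, IsStdParabolic cs W₁ → IsStdParabolic cs W₂ →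
      (W₁ : Set W).Finite → (W₂ : Set W).Finite →
      ∃ m : W,
        IsBrMax cs {x | ∃ a ∈ W₁, ∃ k ∈ K, ∃ b ∈ W₂, x = a * k * b} m ∧
        IsBrMax cs (dblCoset W₁ W₂ v) m) := by
  refine ⟨exists_isBrMax_bruhatLE_mul_mul cs hK, ?_⟩
  rintro _ _ ⟨X₁, rfl⟩ ⟨X₂, rfl⟩ hX₁ hX₂
  obtain ⟨p₁, hp₁⟩ := exists_forall_mem_closure_iff_bruhatLE cs X₁ hX₁
  obtain ⟨p₂, hp₂⟩ := exists_forall_mem_closure_iff_bruhatLE cs X₂ hX₂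
  simpa only [dblCoset, hp₁, hp₂] using exists_isBrMax_bruhatLE_mul_mul cs hK p₁ p₂
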